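/- arXiv:1405.7069 — 2 statements merged into one kernel-verified Lean document; each statement's English description precedes it below -/
import Mathlib

section
/- Let ν > −1/2 and γ ∈ ℝ be fixed, and set F(a,B) = ∫₀¹ s^{ν−1/2} (a+Bs)^{−γ} ds. There exist constants 0 < c ≤ C, depending only on ν and γ, such that for all a > 0 and B ≥ 0: if γ > ν + 1/2, then c ≤ F(a,B) / [(a+B)^{−ν−1/2} a^{−γ+ν+1/2}] ≤ C; if γ = ν + 1/2, then c ≤ F(a,B) / [(a+B)^{−ν−1/2} (1 + log⁺(B/a))] ≤ C; if γ < ν + 1/2, then c ≤ F(a,B) / (a+B)^{−γ} ≤ C. Here log⁺ x = max(log x, 0). -/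
open MeasureTheory Real Set

noncomputable section

/-- `log⁺ x = max (log x) 0`. -/
def logPlus (x : ℝ) : ℝ := max (Real.log x) 0

/-- `F(a,B) = ∫₀¹ s^{ν−1/2} (a+Bs)^{−γ} ds`. -/
def schurF (ν γ a B : ℝ) : ℝ :=
  ∫ s in Set.Ioo (0:ℝ) 1, s ^ (ν - 1/2) * (a + B * s) ^ (-γ)


lemma rpow_comp {x y γ : ℝ} (hy : 0 < y) (h1 : y ≤ x) (h2 : x ≤ 2*y) :
    (2:ℝ) ^ (-|γ|) * y ^ (-γ) ≤ x ^ (-γ) ∧ x ^ (-γ) ≤ (2:ℝ) ^ |γ| * y ^ (-γ) := by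
  have hx : 0 < x := hy.trans_le h1
  have hyn : (0:ℝ) ≤ y ^ (-γ) := Real.rpow_nonneg hy.le _
  have hK1 : (1:ℝ) ≤ (2:ℝ) ^ |γ| := Real.one_le_rpow (by norm_num) (abs_nonneg γ)
  have hK2 : (2:ℝ) ^ (-|γ|) ≤ 1 :=
    Real.rpow_le_one_of_one_le_of_nonpos (by norm_num) (neg_nonpos.2 (abs_nonneg γ))
  have hmul : ∀ z : ℝ, (2*y) ^ z = (2:ℝ) ^ z * y ^ z := fun z =>
    Real.mul_rpow (by norm_num) hy.le
  rcases le_total 0 γ with hγ | hγ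
  · have hu : x ^ (-γ) ≤ y ^ (-γ) := Real.rpow_le_rpow_of_nonpos hy h1 (neg_nonpos.2 hγ)
    have hl : (2*y) ^ (-γ) ≤ x ^ (-γ) := Real.rpow_le_rpow_of_nonpos hx h2 (neg_nonpos.2 hγ)
    rw [hmul] at hl
    rw [abs_of_nonneg hγ]
    refine ⟨hl, hu.trans ?_⟩
    have h1γ : (1:ℝ) ≤ 2 ^ γ := Real.one_le_rpow (by norm_num) hγ
    nlinarith
  · have hu : x ^ (-γ) ≤ (2*y) ^ (-γ) := Real.rpow_le_rpow hx.le h2 (neg_nonneg.2 hγ)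
    rw [hmul] at hu
    have hl : y ^ (-γ) ≤ x ^ (-γ) := Real.rpow_le_rpow hy.le h1 (neg_nonneg.2 hγ)
    rw [abs_of_nonpos hγ, neg_neg]
    have h2n : ((2:ℝ)) ^ (-γ) ≤ (2:ℝ) ^ (-γ) := le_refl _
    constructor
    · have : (2:ℝ) ^ γ ≤ 1 := Real.rpow_le_one_of_one_le_of_nonpos (by norm_num) hγ
      nlinarith [mul_le_mul_of_nonneg_right this hyn]
    · exact hu

lemma int_Ioo_rpow {r : ℝ} (hr : -1 < r) {t : ℝ} (ht : 0 < t) :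
    ∫ s in Ioo (0:ℝ) t, s ^ r = t ^ (r+1) / (r+1) := by
  rw [← integral_Ioc_eq_integral_Ioo, ← intervalIntegral.integral_of_le ht.le,
      integral_rpow (Or.inl hr), Real.zero_rpow (by linarith : r + 1 ≠ 0)]
  ring

lemma int_Ico_rpow {r : ℝ} (hr : r ≠ -1) {t : ℝ} (ht : 0 < t) (ht1 : t ≤ 1) :
    ∫ s in Ico t (1:ℝ), s ^ r = (1 - t ^ (r+1)) / (r+1) := by
  rw [integral_Ico_eq_integral_Ioo, ← integral_Ioc_eq_integral_Ioo,
      ← intervalIntegral.integral_of_le ht1,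
      integral_rpow (Or.inr ⟨hr, Set.notMem_uIcc_of_lt ht (by norm_num)⟩),
      Real.one_rpow]

lemma int_Ico_inv {t : ℝ} (ht : 0 < t) (ht1 : t ≤ 1) :
    ∫ s in Ico t (1:ℝ), s ^ (-1:ℝ) = - Real.log t := by
  rw [integral_Ico_eq_integral_Ioo, ← integral_Ioc_eq_integral_Ioo,
      ← intervalIntegral.integral_of_le ht1]
  have : (∫ s in t..(1:ℝ), s ^ (-1:ℝ)) = ∫ s in t..(1:ℝ), s⁻¹ := by
    apply intervalIntegral.integral_congr
    intro s _
    exact Real.rpow_neg_one s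
  rw [this, integral_inv (Set.notMem_uIcc_of_lt ht (by norm_num))]
  rw [one_div, Real.log_inv]

lemma integrableOn_rpow_Ioo {r : ℝ} (hr : -1 < r) {t : ℝ} (ht : 0 < t) :
    IntegrableOn (fun s : ℝ => s ^ r) (Ioo 0 t) := by
  rw [← intervalIntegrable_iff_integrableOn_Ioo_of_le ht.le]
  exact intervalIntegral.intervalIntegrable_rpow' hr

lemma integrableOn_f {m γ a B : ℝ} (hm : -1 < m) (ha : 0 < a) (hB : 0 ≤ B) :
    IntegrableOn (fun s : ℝ => s ^ m * (a + B*s) ^ (-γ)) (Ioo 0 1) := by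
  set M : ℝ := max (a ^ (-γ)) ((a+B) ^ (-γ)) with hM
  have hmeas : AEStronglyMeasurable (fun s : ℝ => s ^ m * (a + B*s) ^ (-γ))
      (volume.restrict (Ioo 0 1)) := by
    have hc : ContinuousOn (fun s : ℝ => s ^ m * (a + B*s) ^ (-γ)) (Ioo 0 1) := by
      apply ContinuousOn.mul
      · exact continuousOn_id.rpow_const (fun x hx => Or.inl (ne_of_gt hx.1))
      · refine ContinuousOn.rpow_const ?_ (fun x hx => Or.inl (by nlinarith [hx.1, hx.2]))
        exact (continuousOn_const.add (continuousOn_const.mul continuousOn_id))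
    exact hc.aestronglyMeasurable measurableSet_Ioo
  have hint : IntegrableOn (fun s : ℝ => M * s ^ m) (Ioo 0 1) :=
    (integrableOn_rpow_Ioo hm one_pos).const_mul M
  refine hint.integrable.mono' hmeas ?_
  rw [ae_restrict_iff' measurableSet_Ioo]
  filter_upwards with s hs
  obtain ⟨hs0, hs1⟩ := hs
  have hsm : (0:ℝ) ≤ s ^ m := Real.rpow_nonneg hs0.le _
  have hab : 0 < a + B * s := by nlinarith
  have hbound : (a + B*s) ^ (-γ) ≤ M := by
    rcases le_total 0 γ with hγ | hγ
    · exact le_max_of_le_left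
        (Real.rpow_le_rpow_of_nonpos ha (by nlinarith) (neg_nonpos.2 hγ))
    · exact le_max_of_le_right
        (Real.rpow_le_rpow hab.le (by nlinarith) (neg_nonneg.2 hγ))
  have habn : (0:ℝ) ≤ (a + B*s) ^ (-γ) := Real.rpow_nonneg hab.le _
  rw [Real.norm_eq_abs, abs_of_nonneg (mul_nonneg hsm habn)]
  calc s ^ m * (a + B*s) ^ (-γ) ≤ s ^ m * M := by nlinarith
    _ = M * s ^ m := mul_comm _ _

lemma integrableOn_rpow_Ico {r t : ℝ} (ht : 0 < t) :
    IntegrableOn (fun s : ℝ => s ^ r) (Ico t 1) := by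
  have hc : ContinuousOn (fun s : ℝ => s ^ r) (Icc t 1) := by
    intro x hx
    exact (Real.continuousAt_rpow_const x r
      (Or.inl (ne_of_gt (lt_of_lt_of_le ht hx.1)))).continuousWithinAt
  exact (hc.integrableOn_Icc).mono_set Ico_subset_Icc_self

lemma main_est {m γ a B : ℝ} (hm : -1 < m) (ha : 0 < a) (hB : 0 ≤ B) :
    (2:ℝ)^(-|γ|) * (a ^ (-γ) * ((a/(a+B)) ^ (m+1) / (m+1)) +
      (a+B) ^ (-γ) * ∫ s in Ico (a/(a+B)) 1, s ^ (m-γ))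
      ≤ (∫ s in Ioo (0:ℝ) 1, s ^ m * (a + B*s) ^ (-γ)) ∧
    (∫ s in Ioo (0:ℝ) 1, s ^ m * (a + B*s) ^ (-γ)) ≤
      (2:ℝ)^(|γ|) * (a ^ (-γ) * ((a/(a+B)) ^ (m+1) / (m+1)) +
      (a+B) ^ (-γ) * ∫ s in Ico (a/(a+B)) 1, s ^ (m-γ)) := by
  have hP : 0 < a + B := by linarith
  set t := a/(a+B) with htdef
  have ht : 0 < t := div_pos ha hP
  have ht1 : t ≤ 1 := (div_le_one hP).2 (by linarith)
  have htP : t * (a+B) = a := div_mul_cancel₀ a (ne_of_gt hP)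
  have hsplit : Ioo (0:ℝ) 1 = Ioo 0 t ∪ Ico t 1 := by
    ext s
    simp only [mem_Ioo, mem_Ico, mem_union]
    constructor
    · rintro ⟨h0, h1⟩
      rcases lt_or_ge s t with h | h
      · exact Or.inl ⟨h0, h⟩
      · exact Or.inr ⟨h, h1⟩
    · rintro (⟨h0, h1⟩ | ⟨h0, h1⟩)
      · exact ⟨h0, h1.trans_le ht1⟩
      · exact ⟨lt_of_lt_of_le ht h0, h1⟩
  have hdis : Disjoint (Ioo (0:ℝ) t) (Ico t 1) := by
    rw [Set.disjoint_left]
    rintro s ⟨_, h2⟩ ⟨h3, _⟩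
    exact absurd h3 (not_le.2 h2)
  have hfInt := integrableOn_f (m := m) (γ := γ) (a := a) (B := B) hm ha hB
  have hf1 : IntegrableOn (fun s : ℝ => s ^ m * (a + B*s) ^ (-γ)) (Ioo 0 t) :=
    hfInt.mono_set (by rw [hsplit]; exact subset_union_left)
  have hf2 : IntegrableOn (fun s : ℝ => s ^ m * (a + B*s) ^ (-γ)) (Ico t 1) :=
    hfInt.mono_set (by rw [hsplit]; exact subset_union_right)
  -- pointwise comparisons on piece 1
  have key1 : ∀ s ∈ Ioo (0:ℝ) t,
      ((2:ℝ)^(-|γ|) * a^(-γ)) * s^m ≤ s ^ m * (a + B*s) ^ (-γ) ∧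
      s ^ m * (a + B*s) ^ (-γ) ≤ ((2:ℝ)^(|γ|) * a^(-γ)) * s^m := by
    intro s hs
    have hsm : (0:ℝ) ≤ s ^ m := Real.rpow_nonneg hs.1.le _
    have h1 : a ≤ a + B*s := by nlinarith [hs.1]
    have h2 : a + B*s ≤ 2*a := by
      have hbs : B*s ≤ B*t := mul_le_mul_of_nonneg_left hs.2.le hB
      nlinarith
    obtain ⟨hl, hu⟩ := rpow_comp (γ := γ) ha h1 h2
    constructor
    · calc ((2:ℝ)^(-|γ|) * a^(-γ)) * s^m = s^m * ((2:ℝ)^(-|γ|) * a^(-γ)) := mul_comm _ _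
        _ ≤ s ^ m * (a + B*s) ^ (-γ) := mul_le_mul_of_nonneg_left hl hsm
    · calc s ^ m * (a + B*s) ^ (-γ) ≤ s^m * ((2:ℝ)^(|γ|) * a^(-γ)) :=
          mul_le_mul_of_nonneg_left hu hsm
        _ = ((2:ℝ)^(|γ|) * a^(-γ)) * s^m := mul_comm _ _
  -- pointwise comparisons on piece 2
  have key2 : ∀ s ∈ Ico t (1:ℝ),
      ((2:ℝ)^(-|γ|) * (a+B)^(-γ)) * s^(m-γ) ≤ s ^ m * (a + B*s) ^ (-γ) ∧
      s ^ m * (a + B*s) ^ (-γ) ≤ ((2:ℝ)^(|γ|) * (a+B)^(-γ)) * s^(m-γ) := by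
    intro s hs
    have hs0 : 0 < s := lt_of_lt_of_le ht hs.1
    have hsm : (0:ℝ) ≤ s ^ m := Real.rpow_nonneg hs0.le _
    have hy : 0 < (a+B)*s := mul_pos hP hs0
    have h1 : (a+B)*s ≤ a + B*s := by nlinarith [hs.2.le]
    have h2 : a + B*s ≤ 2*((a+B)*s) := by nlinarith [mul_le_mul_of_nonneg_right hs.1 hP.le]
    obtain ⟨hl, hu⟩ := rpow_comp (γ := γ) hy h1 h2
    have hrw : ∀ K : ℝ, (K * (a+B)^(-γ)) * s^(m-γ) = s^m * (K * ((a+B)*s)^(-γ)) := by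
      intro K
      rw [Real.mul_rpow hP.le hs0.le, sub_eq_add_neg, Real.rpow_add hs0]
      ring
    constructor
    · rw [hrw]
      exact mul_le_mul_of_nonneg_left hl hsm
    · rw [hrw]
      exact mul_le_mul_of_nonneg_left hu hsm
  -- integrability of bounding functions
  have hb1 : ∀ K : ℝ, IntegrableOn (fun s : ℝ => K * s^m) (Ioo 0 t) :=
    fun K => (integrableOn_rpow_Ioo hm ht).const_mul K
  have hb2 : ∀ K : ℝ, IntegrableOn (fun s : ℝ => K * s^(m-γ)) (Ico t 1) :=
    fun K => (integrableOn_rpow_Ico ht).const_mul K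
  -- values of bounding integrals
  have hv1 : ∀ K : ℝ, (∫ s in Ioo (0:ℝ) t, K * s^m) = K * (t^(m+1)/(m+1)) := by
    intro K
    rw [MeasureTheory.integral_const_mul, int_Ioo_rpow hm ht]
  have hv2 : ∀ K : ℝ, (∫ s in Ico t (1:ℝ), K * s^(m-γ)) = K * ∫ s in Ico t (1:ℝ), s^(m-γ) := by
    intro K
    rw [MeasureTheory.integral_const_mul]
  -- split the integral
  have hsum : (∫ s in Ioo (0:ℝ) 1, s ^ m * (a + B*s) ^ (-γ))
      = (∫ s in Ioo (0:ℝ) t, s ^ m * (a + B*s) ^ (-γ))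
        + (∫ s in Ico t (1:ℝ), s ^ m * (a + B*s) ^ (-γ)) := by
    rw [hsplit]
    exact MeasureTheory.setIntegral_union hdis measurableSet_Ico hf1 hf2
  constructor
  · have l1 : ((2:ℝ)^(-|γ|) * a^(-γ)) * (t^(m+1)/(m+1))
        ≤ ∫ s in Ioo (0:ℝ) t, s ^ m * (a + B*s) ^ (-γ) := by
      rw [← hv1]
      exact MeasureTheory.setIntegral_mono_on (hb1 _) hf1 measurableSet_Ioo
        (fun s hs => (key1 s hs).1)
    have l2 : ((2:ℝ)^(-|γ|) * (a+B)^(-γ)) * ∫ s in Ico t (1:ℝ), s^(m-γ)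
        ≤ ∫ s in Ico t (1:ℝ), s ^ m * (a + B*s) ^ (-γ) := by
      rw [← hv2]
      exact MeasureTheory.setIntegral_mono_on (hb2 _) hf2 measurableSet_Ico
        (fun s hs => (key2 s hs).1)
    rw [hsum]
    calc (2:ℝ)^(-|γ|) * (a ^ (-γ) * (t ^ (m+1) / (m+1)) + (a+B) ^ (-γ) * ∫ s in Ico t 1, s ^ (m-γ))
        = ((2:ℝ)^(-|γ|) * a^(-γ)) * (t^(m+1)/(m+1))
          + ((2:ℝ)^(-|γ|) * (a+B)^(-γ)) * ∫ s in Ico t (1:ℝ), s^(m-γ) := by ring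
      _ ≤ _ := add_le_add l1 l2
  · have l1 : (∫ s in Ioo (0:ℝ) t, s ^ m * (a + B*s) ^ (-γ))
        ≤ ((2:ℝ)^(|γ|) * a^(-γ)) * (t^(m+1)/(m+1)) := by
      rw [← hv1]
      exact MeasureTheory.setIntegral_mono_on hf1 (hb1 _) measurableSet_Ioo
        (fun s hs => (key1 s hs).2)
    have l2 : (∫ s in Ico t (1:ℝ), s ^ m * (a + B*s) ^ (-γ))
        ≤ ((2:ℝ)^(|γ|) * (a+B)^(-γ)) * ∫ s in Ico t (1:ℝ), s^(m-γ) := by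
      rw [← hv2]
      exact MeasureTheory.setIntegral_mono_on hf2 (hb2 _) measurableSet_Ico
        (fun s hs => (key2 s hs).2)
    rw [hsum]
    calc (∫ s in Ioo (0:ℝ) t, s ^ m * (a + B*s) ^ (-γ))
          + (∫ s in Ico t (1:ℝ), s ^ m * (a + B*s) ^ (-γ))
        ≤ ((2:ℝ)^(|γ|) * a^(-γ)) * (t^(m+1)/(m+1))
          + ((2:ℝ)^(|γ|) * (a+B)^(-γ)) * ∫ s in Ico t (1:ℝ), s^(m-γ) := add_le_add l1 l2
      _ = _ := by ring


lemma logPlus_nonneg (x : ℝ) : 0 ≤ logPlus x := le_max_right _ _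

lemma logPlus_le_log_one_add {x : ℝ} (hx : 0 ≤ x) : logPlus x ≤ Real.log (1 + x) := by
  apply max_le
  · rcases eq_or_lt_of_le hx with h | h
    · rw [← h, Real.log_zero]
      exact Real.log_nonneg (by norm_num)
    · exact Real.log_le_log h (by linarith)
  · exact Real.log_nonneg (by linarith)

lemma log_one_add_le_logPlus {x : ℝ} (hx : 0 ≤ x) :
    Real.log (1 + x) ≤ Real.log 2 + logPlus x := by
  rcases le_total x 1 with h | h
  · have h1 : Real.log (1 + x) ≤ Real.log 2 := Real.log_le_log (by linarith) (by linarith)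
    have := logPlus_nonneg x
    linarith
  · have hx0 : 0 < x := by linarith
    have h1 : Real.log (1 + x) ≤ Real.log (2 * x) :=
      Real.log_le_log (by linarith) (by linarith)
    rw [Real.log_mul (by norm_num) (ne_of_gt hx0)] at h1
    have h2 : Real.log x ≤ logPlus x := le_max_left _ _
    linarith

set_option maxHeartbeats 1600000 in
/-- two-sided estimates for `F(a,B)`, uniform in `a > 0`, `B ≥ 0`. -/
theorem schurF_two_sided_estimates (ν γ : ℝ) (hν : -1/2 < ν) :
    ∃ c C : ℝ, 0 < c ∧ c ≤ C ∧ ∀ a B : ℝ, 0 < a → 0 ≤ B →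
      (ν + 1/2 < γ →
        c * ((a + B) ^ (-ν - 1/2) * a ^ (-γ + ν + 1/2)) ≤ schurF ν γ a B ∧
        schurF ν γ a B ≤ C * ((a + B) ^ (-ν - 1/2) * a ^ (-γ + ν + 1/2))) ∧
      (γ = ν + 1/2 →
        c * ((a + B) ^ (-ν - 1/2) * (1 + logPlus (B / a))) ≤ schurF ν γ a B ∧
        schurF ν γ a B ≤ C * ((a + B) ^ (-ν - 1/2) * (1 + logPlus (B / a)))) ∧
      (γ < ν + 1/2 →
        c * (a + B) ^ (-γ) ≤ schurF ν γ a B ∧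
        schurF ν γ a B ≤ C * (a + B) ^ (-γ)) := by
  have hm : -1 < ν - 1/2 := by linarith
  set ρ : ℝ := ν + 1/2 with hρdef
  have hρ : 0 < ρ := by rw [hρdef]; linarith
  set c₀ : ℝ := min (1/ρ) (min 1 (if γ < ρ then (ρ - γ)⁻¹ else 1)) with hc₀def
  set C₀ : ℝ := 1/ρ + |(γ - ρ)⁻¹| + Real.log 2 + 1 +
      (if γ < ρ then max (1/ρ) ((ρ - γ)⁻¹) else 0) with hC₀def
  clear_value ρ c₀ C₀
  have hlog2 : (0:ℝ) ≤ Real.log 2 := Real.log_nonneg (by norm_num)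
  have habs : (0:ℝ) ≤ |(γ - ρ)⁻¹| := abs_nonneg _
  have hif : (0:ℝ) ≤ (if γ < ρ then max (1/ρ) ((ρ - γ)⁻¹) else 0) := by
    split_ifs with h
    · exact le_max_of_le_left (by positivity)
    · exact le_rfl
  have hc₀1 : c₀ ≤ 1/ρ := by rw [hc₀def]; exact min_le_left _ _
  have hc₀2 : c₀ ≤ 1 := by rw [hc₀def]; exact (min_le_right _ _).trans (min_le_left _ _)
  have hc₀3 : γ < ρ → c₀ ≤ (ρ - γ)⁻¹ := by
    intro h
    rw [hc₀def, if_pos h]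
    exact (min_le_right _ _).trans (min_le_right _ _)
  have hc₀pos : 0 < c₀ := by
    rw [hc₀def]
    split_ifs with h
    · have : 0 < (ρ - γ)⁻¹ := by
        have : 0 < ρ - γ := by linarith
        positivity
      simp only [lt_min_iff]
      exact ⟨by positivity, one_pos, this⟩
    · simp only [lt_min_iff]
      exact ⟨by positivity, one_pos, one_pos⟩
  have hC₀1 : γ < ρ → ((ρ - γ)⁻¹ ≤ C₀ ∧ 1/ρ ≤ C₀) := by
    intro h
    rw [hC₀def, if_pos h]
    constructor
    · have h1 : (ρ - γ)⁻¹ ≤ max (1/ρ) ((ρ - γ)⁻¹) := le_max_right _ _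
      have : (0:ℝ) < 1/ρ := by positivity
      linarith
    · have h1 : (1/ρ : ℝ) ≤ max (1/ρ) ((ρ - γ)⁻¹) := le_max_left _ _
      have : (0:ℝ) < 1/ρ := by positivity
      linarith
  have hC₀2 : 1/ρ + Real.log 2 + 1 ≤ C₀ := by
    rw [hC₀def]
    linarith
  have hC₀3 : ρ < γ → 1/ρ + (γ - ρ)⁻¹ ≤ C₀ := by
    intro h
    have := le_abs_self ((γ - ρ)⁻¹)
    rw [hC₀def]
    linarith
  have hC₀4 : (1:ℝ) ≤ C₀ := by
    have : (0:ℝ) < 1/ρ := by positivity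
    linarith
  have hK1 : (1:ℝ) ≤ (2:ℝ) ^ |γ| := Real.one_le_rpow (by norm_num) (abs_nonneg γ)
  have hKi1 : ((2:ℝ)) ^ (-|γ|) ≤ 1 :=
    Real.rpow_le_one_of_one_le_of_nonpos (by norm_num) (neg_nonpos.2 (abs_nonneg γ))
  have hKipos : (0:ℝ) < (2:ℝ) ^ (-|γ|) := Real.rpow_pos_of_pos (by norm_num) _
  refine ⟨(2:ℝ) ^ (-|γ|) * c₀, (2:ℝ) ^ |γ| * C₀, by positivity, ?_, ?_⟩
  · have h1 : (2:ℝ) ^ (-|γ|) * c₀ ≤ c₀ := by nlinarith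
    have h2 : C₀ ≤ (2:ℝ) ^ |γ| * C₀ := by nlinarith
    have h3 : c₀ ≤ C₀ := hc₀2.trans hC₀4
    linarith
  intro a B ha hB
  have hP : 0 < a + B := by linarith
  have hPγ : 0 < (a + B) ^ (-γ) := Real.rpow_pos_of_pos hP _
  set t : ℝ := a / (a + B) with htdef
  have ht : 0 < t := div_pos ha hP
  have ht1 : t ≤ 1 := (div_le_one hP).2 (by linarith)
  have htP : t * (a + B) = a := div_mul_cancel₀ a (ne_of_gt hP)
  clear_value t
  have est := main_est (m := ν - 1/2) (γ := γ) (a := a) (B := B) hm ha hB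
  rw [show ν - 1/2 + 1 = ρ by rw [hρdef]; ring] at est
  rw [← htdef] at est
  have hFT : a ^ (-γ) = t ^ (-γ) * (a + B) ^ (-γ) := by
    calc a ^ (-γ) = (t * (a + B)) ^ (-γ) := by rw [htP]
      _ = t ^ (-γ) * (a + B) ^ (-γ) := Real.mul_rpow ht.le hP.le
  have hMgen : ∀ Y : ℝ, a ^ (-γ) * (t ^ ρ / ρ) + (a + B) ^ (-γ) * Y
      = (a + B) ^ (-γ) * (t ^ (ρ - γ) / ρ + Y) := by
    intro Y
    rw [show ρ - γ = -γ + ρ by ring, Real.rpow_add ht, hFT]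
    ring
  refine ⟨?_, ?_, ?_⟩
  -- CASE 1 : ν + 1/2 < γ
  · intro hcase
    have hγρ : ρ < γ := hcase
    have hne : ν - 1/2 - γ ≠ -1 := by
      intro h
      rw [hρdef] at hγρ
      linarith
    rw [int_Ico_rpow hne ht ht1, show ν - 1/2 - γ + 1 = ρ - γ by rw [hρdef]; ring,
        hMgen] at est
    set u : ℝ := t ^ (ρ - γ) with hudef
    clear_value u
    have hu0 : 0 < u := by rw [hudef]; exact Real.rpow_pos_of_pos ht _
    have hu1 : 1 ≤ u := by
      rw [hudef]
      exact Real.one_le_rpow_of_pos_of_le_one_of_nonpos ht ht1 (by linarith)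
    have hE : (a + B) ^ (-ν - 1/2) * a ^ (-γ + ν + 1/2) = (a + B) ^ (-γ) * u := by
      rw [show (-ν - 1/2 : ℝ) = -ρ by rw [hρdef]; ring,
          show (-γ + ν + 1/2 : ℝ) = ρ - γ by rw [hρdef]; ring]
      have ha' : a ^ (ρ - γ) = u * (a + B) ^ (ρ - γ) := by
        rw [hudef]
        calc a ^ (ρ - γ) = (t * (a + B)) ^ (ρ - γ) := by rw [htP]
          _ = t ^ (ρ - γ) * (a + B) ^ (ρ - γ) := Real.mul_rpow ht.le hP.le
      rw [ha']
      calc (a + B) ^ (-ρ) * (u * (a + B) ^ (ρ - γ))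
          = u * ((a + B) ^ (-ρ) * (a + B) ^ (ρ - γ)) := by ring
        _ = u * (a + B) ^ (-ρ + (ρ - γ)) := by rw [← Real.rpow_add hP]
        _ = (a + B) ^ (-γ) * u := by rw [show -ρ + (ρ - γ) = -γ by ring]; ring
    have hT2 : 0 ≤ (1 - u) / (ρ - γ) :=
      div_nonneg_iff.2 (Or.inr ⟨by linarith, by linarith⟩)
    have hinner1 : c₀ * u ≤ u / ρ + (1 - u) / (ρ - γ) := by
      have h1 : c₀ * u ≤ (1/ρ) * u := mul_le_mul_of_nonneg_right hc₀1 hu0.le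
      have h2 : (1/ρ) * u = u / ρ := by ring
      linarith
    have hinner2 : u / ρ + (1 - u) / (ρ - γ) ≤ C₀ * u := by
      have hd : 0 < γ - ρ := by linarith
      have hC := hC₀3 hγρ
      have h1 : (1 - u) / (ρ - γ) = (u - 1) * (γ - ρ)⁻¹ := by
        rw [div_eq_mul_inv, show (ρ - γ) = -(γ - ρ) by ring]
        rw [inv_neg]
        ring
      have h2 : (u - 1) * (γ - ρ)⁻¹ ≤ u * (γ - ρ)⁻¹ := by
        apply mul_le_mul_of_nonneg_right (by linarith) (by positivity)
      have h3 : u / ρ = u * (1/ρ) := by ring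
      have h5 : u * (1/ρ + (γ - ρ)⁻¹) ≤ u * C₀ := mul_le_mul_of_nonneg_left hC hu0.le
      have h6 : u * (1/ρ + (γ - ρ)⁻¹) = u * (1/ρ) + u * (γ - ρ)⁻¹ := by ring
      linarith
    constructor
    · calc (2:ℝ) ^ (-|γ|) * c₀ * ((a + B) ^ (-ν - 1/2) * a ^ (-γ + ν + 1/2))
          = (2:ℝ) ^ (-|γ|) * ((a + B) ^ (-γ) * (c₀ * u)) := by rw [hE]; ring
        _ ≤ (2:ℝ) ^ (-|γ|) * ((a + B) ^ (-γ) * (u / ρ + (1 - u) / (ρ - γ))) := by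
            apply mul_le_mul_of_nonneg_left _ hKipos.le
            exact mul_le_mul_of_nonneg_left hinner1 hPγ.le
        _ ≤ schurF ν γ a B := est.1
    · calc schurF ν γ a B
          ≤ (2:ℝ) ^ |γ| * ((a + B) ^ (-γ) * (u / ρ + (1 - u) / (ρ - γ))) := est.2
        _ ≤ (2:ℝ) ^ |γ| * ((a + B) ^ (-γ) * (C₀ * u)) := by
            apply mul_le_mul_of_nonneg_left _ (by positivity)
            exact mul_le_mul_of_nonneg_left hinner2 hPγ.le
        _ = (2:ℝ) ^ |γ| * C₀ * ((a + B) ^ (-ν - 1/2) * a ^ (-γ + ν + 1/2)) := by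
            rw [hE]; ring
  -- CASE 2 : γ = ν + 1/2
  · intro hcase
    have hγρ : γ = ρ := hcase
    rw [show ν - 1/2 - γ = (-1 : ℝ) by rw [hγρ, hρdef]; ring,
        int_Ico_inv ht ht1, hMgen, show ρ - γ = (0:ℝ) by rw [hγρ]; ring,
        Real.rpow_zero] at est
    set L : ℝ := logPlus (B / a) with hLdef
    clear_value L
    have hL0 : 0 ≤ L := by rw [hLdef]; exact logPlus_nonneg _
    have hx0 : (0:ℝ) ≤ B / a := div_nonneg hB ha.le
    have hneg : -Real.log t = Real.log (1 + B / a) := by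
      rw [htdef, show (1:ℝ) + B / a = (a + B) / a by field_simp,
          Real.log_div ha.ne' hP.ne', Real.log_div hP.ne' ha.ne']
      ring
    have hlogA : L ≤ -Real.log t := by
      rw [hneg, hLdef]; exact logPlus_le_log_one_add hx0
    have hlogB : -Real.log t ≤ Real.log 2 + L := by
      rw [hneg, hLdef]; exact log_one_add_le_logPlus hx0
    have hE : (a + B) ^ (-ν - 1/2) = (a + B) ^ (-γ) := by
      rw [show (-ν - 1/2 : ℝ) = -γ by rw [hγρ, hρdef]; ring]
    have hinner1 : c₀ * (1 + L) ≤ 1 / ρ + -Real.log t := by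
      have h1 : c₀ * L ≤ 1 * L := mul_le_mul_of_nonneg_right hc₀2 hL0
      nlinarith
    have hinner2 : 1 / ρ + -Real.log t ≤ C₀ * (1 + L) := by
      have h1 : 1 * L ≤ C₀ * L := mul_le_mul_of_nonneg_right hC₀4 hL0
      nlinarith
    constructor
    · calc (2:ℝ) ^ (-|γ|) * c₀ * ((a + B) ^ (-ν - 1/2) * (1 + L))
          = (2:ℝ) ^ (-|γ|) * ((a + B) ^ (-γ) * (c₀ * (1 + L))) := by rw [hE]; ring
        _ ≤ (2:ℝ) ^ (-|γ|) * ((a + B) ^ (-γ) * (1 / ρ + -Real.log t)) := by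
            apply mul_le_mul_of_nonneg_left _ hKipos.le
            exact mul_le_mul_of_nonneg_left hinner1 hPγ.le
        _ ≤ schurF ν γ a B := est.1
    · calc schurF ν γ a B
          ≤ (2:ℝ) ^ |γ| * ((a + B) ^ (-γ) * (1 / ρ + -Real.log t)) := est.2
        _ ≤ (2:ℝ) ^ |γ| * ((a + B) ^ (-γ) * (C₀ * (1 + L))) := by
            apply mul_le_mul_of_nonneg_left _ (by positivity)
            exact mul_le_mul_of_nonneg_left hinner2 hPγ.le
        _ = (2:ℝ) ^ |γ| * C₀ * ((a + B) ^ (-ν - 1/2) * (1 + L)) := by rw [hE]; ring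
  -- CASE 3 : γ < ν + 1/2
  · intro hcase
    have hγρ : γ < ρ := hcase
    have hε : 0 < ρ - γ := by linarith
    have hne : ν - 1/2 - γ ≠ -1 := by
      intro h
      rw [hρdef] at hγρ
      linarith
    rw [int_Ico_rpow hne ht ht1, show ν - 1/2 - γ + 1 = ρ - γ by rw [hρdef]; ring,
        hMgen] at est
    set u : ℝ := t ^ (ρ - γ) with hudef
    clear_value u
    have hu0 : 0 < u := by rw [hudef]; exact Real.rpow_pos_of_pos ht _
    have hu1 : u ≤ 1 := by rw [hudef]; exact Real.rpow_le_one ht.le ht1 hε.le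
    have hεi : 0 < (ρ - γ)⁻¹ := by positivity
    obtain ⟨hCa, hCb⟩ := hC₀1 hγρ
    have hinner1 : c₀ ≤ u / ρ + (1 - u) / (ρ - γ) := by
      have h1 : u * c₀ ≤ u * (1/ρ) := mul_le_mul_of_nonneg_left hc₀1 hu0.le
      have h2 : (1 - u) * c₀ ≤ (1 - u) * (ρ - γ)⁻¹ :=
        mul_le_mul_of_nonneg_left (hc₀3 hγρ) (by linarith)
      have h3 : u / ρ = u * (1/ρ) := by ring
      have h4 : (1 - u) / (ρ - γ) = (1 - u) * (ρ - γ)⁻¹ := by rw [div_eq_mul_inv]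
      nlinarith [h1, h2, h3, h4]
    have hinner2 : u / ρ + (1 - u) / (ρ - γ) ≤ C₀ := by
      have h1 : u * (1/ρ) ≤ u * C₀ := by
        apply mul_le_mul_of_nonneg_left _ hu0.le
        linarith
      have h2 : (1 - u) * (ρ - γ)⁻¹ ≤ (1 - u) * C₀ :=
        mul_le_mul_of_nonneg_left hCa (by linarith)
      have h3 : u / ρ = u * (1/ρ) := by ring
      have h4 : (1 - u) / (ρ - γ) = (1 - u) * (ρ - γ)⁻¹ := by rw [div_eq_mul_inv]
      nlinarith [h1, h2, h3, h4]
    constructor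
    · calc (2:ℝ) ^ (-|γ|) * c₀ * (a + B) ^ (-γ)
          = (2:ℝ) ^ (-|γ|) * ((a + B) ^ (-γ) * c₀) := by ring
        _ ≤ (2:ℝ) ^ (-|γ|) * ((a + B) ^ (-γ) * (u / ρ + (1 - u) / (ρ - γ))) := by
            apply mul_le_mul_of_nonneg_left _ hKipos.le
            exact mul_le_mul_of_nonneg_left hinner1 hPγ.le
        _ ≤ schurF ν γ a B := est.1
    · calc schurF ν γ a B
          ≤ (2:ℝ) ^ |γ| * ((a + B) ^ (-γ) * (u / ρ + (1 - u) / (ρ - γ))) := est.2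
        _ ≤ (2:ℝ) ^ |γ| * ((a + B) ^ (-γ) * C₀) := by
            apply mul_le_mul_of_nonneg_left _ (by positivity)
            exact mul_le_mul_of_nonneg_left hinner2 hPγ.le
        _ = (2:ℝ) ^ |γ| * C₀ * (a + B) ^ (-γ) := by ring

end
end

section
/- Let ν, λ ∈ ℝ, κ < 1 and γ > −1 be fixed with ν + λ ≥ 0 and γ + 1 + ν − κ ≥ 0, and assume it is not the case that both ν + λ = 0 and γ + 1 + ν − κ = 0. Then there exists a constant C such that for all φ ∈ (0,π): φ^ν ∫₀^{π/4} (φ/(θ+φ))^λ θ^γ |θ−φ|^{−κ} dθ ≤ C. -/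
/-!
Split `(0, π/4)` at `φ/2` and `2φ`. On `(0, φ/2]` the integrand (times `φ^ν`) is comparable to
`φ^(ν-κ) θ^γ`, on `(φ/2, 2φ]` to `φ^(ν+γ) |θ-φ|^(-κ)` and beyond `2φ` to `φ^(ν+λ) θ^(γ-λ-κ)`.
The first two pieces integrate to `O(φ^b)` with `b = γ+1+ν-κ ≥ 0`, hence are bounded for `φ < π`.
Writing `a = ν+λ`, the tail is `φ^a ∫_{2φ}^{π/4} θ^(b-a-1) dθ`: if `b > 0`, then `φ^a ≤ θ^a` reduces it
to the integrable `θ^(b-1)`; if `b = 0`, then `a > 0` and the integral over `(2φ, ∞)` is `(2φ)^(-a)/a`.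
-/

open MeasureTheory Real Set

noncomputable section

open Interval

theorem rpow_le_of_mem_Icc_div_mul {c K x : ℝ} (r : ℝ) (hc : 0 < c) (hK : 1 ≤ K)
    (hx : x ∈ Icc (c / K) (K * c)) : x ^ r ≤ K ^ |r| * c ^ r := by
  have hK₀ : 0 < K := zero_lt_one.trans_le hK
  have hx₀ : 0 < x := (div_pos hc hK₀).trans_le hx.1
  rcases le_or_gt 0 r with hr | hr
  · calc x ^ r ≤ (K * c) ^ r := rpow_le_rpow hx₀.le hx.2 hr
      _ = K ^ r * c ^ r := mul_rpow hK₀.le hc.le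
      _ ≤ K ^ |r| * c ^ r :=
        mul_le_mul_of_nonneg_right (rpow_le_rpow_of_exponent_le hK (le_abs_self r))
          (rpow_nonneg hc.le r)
  · calc x ^ r ≤ (c / K) ^ r := rpow_le_rpow_of_nonpos (div_pos hc hK₀) hx.1 hr.le
      _ = K ^ |r| * c ^ r := by
        rw [div_rpow hc.le hK₀.le, abs_of_neg hr, rpow_neg hK₀.le]; ring

theorem setIntegral_le_add_of_subset_union {α : Type*} [MeasurableSpace α] {μ : Measure α}
    {f : α → ℝ} {s t u : Set α} (hst : s ⊆ t ∪ u) (hf : 0 ≤ᵐ[μ.restrict (t ∪ u)] f)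
    (ht : IntegrableOn f t μ) (hu : IntegrableOn f u μ) :
    ∫ x in s, f x ∂μ ≤ ∫ x in t, f x ∂μ + ∫ x in u, f x ∂μ := by
  rw [← integral_add_measure ht hu]
  refine integral_mono_measure ((Measure.restrict_mono hst le_rfl).trans
    (Measure.restrict_union_le t u)) ?_ (Integrable.add_measure ht hu)
  exact ae_add_measure_iff.2 ⟨ae_restrict_of_ae_restrict_of_subset subset_union_left hf,
    ae_restrict_of_ae_restrict_of_subset subset_union_right hf⟩

theorem setIntegral_Ioo_le_add_add {f : ℝ → ℝ} {a b R : ℝ} (ha : 0 ≤ a) (hab : a ≤ b)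
    (hf : ∀ x > 0, 0 ≤ f x) (h₁ : IntegrableOn f (Ioc 0 a)) (h₂ : IntegrableOn f (Ioc a b))
    (h₃ : IntegrableOn f (Ioc b R)) :
    ∫ x in Ioo 0 R, f x ≤
      (∫ x in Ioc 0 a, f x) + ((∫ x in Ioc a b, f x) + ∫ x in Ioc b R, f x) := by
  have hcover : Ioo 0 R ⊆ Ioc 0 a ∪ (Ioc a b ∪ Ioc b R) := by
    rintro x ⟨hx₀, hxR⟩
    simp only [mem_union, mem_Ioc]
    by_cases hxa : x ≤ a
    · exact Or.inl ⟨hx₀, hxa⟩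
    by_cases hxb : x ≤ b
    · exact Or.inr (Or.inl ⟨by linarith, hxb⟩)
    · exact Or.inr (Or.inr ⟨by linarith, hxR.le⟩)
  have hnonneg : ∀ s ⊆ Ioc 0 a ∪ (Ioc a b ∪ Ioc b R), 0 ≤ᵐ[volume.restrict s] f := by
    refine fun s hs ↦ ae_restrict_of_ae_restrict_of_subset hs <|
      ae_restrict_of_forall_mem (by measurability) fun x hx ↦ hf x ?_
    rcases hx with hx | hx | hx <;> linarith [hx.1]
  exact (setIntegral_le_add_of_subset_union hcover (hnonneg _ subset_rfl) h₁ (h₂.union h₃)).trans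
    <| add_le_add_right (setIntegral_le_add_of_subset_union subset_rfl
      (hnonneg _ subset_union_right) h₂ h₃) _

theorem integrableOn_and_setIntegral_le_of_le {α : Type*} [MeasurableSpace α] {μ : Measure α}
    {f g : α → ℝ} {s : Set α} (hs : MeasurableSet s) (hf : AEStronglyMeasurable f (μ.restrict s))
    (hf₀ : ∀ x ∈ s, 0 ≤ f x) (hfg : ∀ x ∈ s, f x ≤ g x) (hg : IntegrableOn g s μ) :
    IntegrableOn f s μ ∧ ∫ x in s, f x ∂μ ≤ ∫ x in s, g x ∂μ := by
  have hfi : IntegrableOn f s μ := hg.mono' hf <| ae_restrict_of_forall_mem hs fun x hx ↦ by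
    rw [norm_of_nonneg (hf₀ x hx)]; exact hfg x hx
  exact ⟨hfi, setIntegral_mono_on hfi hg hs hfg⟩

theorem integral_rpow_abs_sub_uIoc {a b r : ℝ} (hr : -1 < r) :
    ∫ x in Ι a b, |x - a| ^ r = |b - a| ^ (r + 1) / (r + 1) := by
  have hr₁ : r + 1 ≠ 0 := by linarith
  rcases le_or_gt a b with hab | hab
  · calc ∫ x in Ι a b, |x - a| ^ r = ∫ x in a..b, |x - a| ^ r := by
          rw [uIoc_of_le hab, ← intervalIntegral.integral_of_le hab]
      _ = ∫ x in 0..(b - a), x ^ r := by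
          rw [intervalIntegral.integral_comp_sub_right (fun x ↦ |x| ^ r), sub_self]
          refine intervalIntegral.integral_congr fun x hx ↦ ?_
          rw [uIcc_of_le (sub_nonneg.2 hab)] at hx
          simp only [abs_of_nonneg hx.1]
      _ = |b - a| ^ (r + 1) / (r + 1) := by
          rw [integral_rpow (Or.inl hr), zero_rpow hr₁, sub_zero,
            abs_of_nonneg (sub_nonneg.2 hab)]
  · calc ∫ x in Ι a b, |x - a| ^ r = ∫ x in b..a, |x - a| ^ r := by
          rw [uIoc_of_ge hab.le, ← intervalIntegral.integral_of_le hab.le]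
      _ = ∫ x in b - a..0, (-x) ^ r := by
          rw [intervalIntegral.integral_comp_sub_right (fun x ↦ |x| ^ r), sub_self]
          refine intervalIntegral.integral_congr fun x hx ↦ ?_
          rw [uIcc_of_le (sub_nonpos.2 hab.le)] at hx
          simp only [abs_of_nonpos hx.2]
      _ = |b - a| ^ (r + 1) / (r + 1) := by
          rw [intervalIntegral.integral_comp_neg (fun x ↦ x ^ r), integral_rpow (Or.inl hr),
            neg_zero, zero_rpow hr₁, sub_zero, abs_of_neg (sub_neg.2 hab), neg_sub]

theorem intervalIntegrable_rpow_abs_sub {r : ℝ} (hr : -1 < r) (a b c : ℝ) :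
    IntervalIntegrable (fun x ↦ |x - c| ^ r) volume a b := by
  have hc : ∀ d, IntervalIntegrable (fun x ↦ |x - c| ^ r) volume c d := by
    intro d
    rcases eq_or_ne c d with rfl | hcd
    · exact IntervalIntegrable.refl
    refine intervalIntegrable_iff.2 (Integrable.of_integral_ne_zero ?_)
    rw [integral_rpow_abs_sub_uIoc hr]
    exact div_ne_zero (rpow_pos_of_pos (abs_pos.2 (sub_ne_zero.2 hcd.symm)) _).ne'
      (by linarith)
  exact (hc a).symm.trans (hc b)

theorem integral_Ioc_rpow_abs_sub {a b c r : ℝ} (hr : -1 < r) (hac : a ≤ c) (hcb : c ≤ b) :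
    ∫ x in Ioc a b, |x - c| ^ r = ((c - a) ^ (r + 1) + (b - c) ^ (r + 1)) / (r + 1) := by
  have hint : ∀ d, IntegrableOn (fun x ↦ |x - c| ^ r) (Ι c d) :=
    fun d ↦ intervalIntegrable_iff.1 (intervalIntegrable_rpow_abs_sub hr c d c)
  rw [← Ioc_union_Ioc_eq_Ioc hac hcb, setIntegral_union (Ioc_disjoint_Ioc_of_le le_rfl)
      measurableSet_Ioc (uIoc_of_ge hac ▸ hint a) (uIoc_of_le hcb ▸ hint b),
    ← uIoc_of_ge hac, ← uIoc_of_le hcb, integral_rpow_abs_sub_uIoc hr,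
    integral_rpow_abs_sub_uIoc hr, abs_sub_comm, abs_of_nonneg (sub_nonneg.2 hac),
    abs_of_nonneg (sub_nonneg.2 hcb), add_div]

theorem exists_rpow_mul_integral_Ioc_two_mul_le {a b : ℝ} (R : ℝ) (ha : 0 ≤ a) (hb : 0 ≤ b)
    (hab : 0 < a + b) :
    ∃ C, ∀ φ > 0, φ ^ a * ∫ θ in Ioc (2 * φ) R, θ ^ (b - a - 1) ≤ C := by
  rcases hb.lt_or_eq with hb | rfl
  · have hint : IntegrableOn (fun θ : ℝ ↦ θ ^ (b - 1)) (Ioc 0 R) :=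
      (intervalIntegral.intervalIntegrable_rpow' (by linarith)).1
    refine ⟨∫ θ in Ioc 0 R, θ ^ (b - 1), fun φ hφ ↦ ?_⟩
    rw [← integral_const_mul]
    calc ∫ θ in Ioc (2 * φ) R, φ ^ a * θ ^ (b - a - 1)
        ≤ ∫ θ in Ioc (2 * φ) R, θ ^ (b - 1) := by
          refine integral_mono_of_nonneg
            (ae_restrict_of_forall_mem measurableSet_Ioc fun θ hθ ↦ by
              have : 0 < θ := by linarith [hθ.1]
              positivity)
            (hint.mono_set (Ioc_subset_Ioc_left (by linarith)))
            (ae_restrict_of_forall_mem measurableSet_Ioc fun θ hθ ↦ ?_)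
          have hθ₀ : 0 < θ := by linarith [hθ.1]
          calc φ ^ a * θ ^ (b - a - 1) ≤ θ ^ a * θ ^ (b - a - 1) := by
                gcongr; linarith [hθ.1]
            _ = θ ^ (b - 1) := by rw [← rpow_add hθ₀]; ring_nf
      _ ≤ ∫ θ in Ioc 0 R, θ ^ (b - 1) :=
          setIntegral_mono_set hint
            (ae_restrict_of_forall_mem measurableSet_Ioc fun θ hθ ↦ rpow_nonneg hθ.1.le _)
            (Ioc_subset_Ioc_left (by linarith)).eventuallyLE
  · have ha : 0 < a := by linarith
    refine ⟨2 ^ (-a) / a, fun φ hφ ↦ ?_⟩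
    have hexp : (0 : ℝ) - a - 1 < -1 := by linarith
    calc φ ^ a * ∫ θ in Ioc (2 * φ) R, θ ^ (0 - a - 1)
        ≤ φ ^ a * ∫ θ in Ioi (2 * φ), θ ^ (0 - a - 1) :=
          mul_le_mul_of_nonneg_left (setIntegral_mono_set
            (integrableOn_Ioi_rpow_of_lt hexp (by positivity))
            (ae_restrict_of_forall_mem measurableSet_Ioi fun θ hθ ↦
              rpow_nonneg (by linarith [mem_Ioi.1 hθ]) _)
            Ioc_subset_Ioi_self.eventuallyLE) (rpow_nonneg hφ.le a)
      _ = 2 ^ (-a) / a := by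
          rw [integral_Ioi_rpow_of_lt hexp (by positivity), mul_rpow zero_le_two hφ.le]
          rw [show (0 : ℝ) - a - 1 + 1 = -a by ring, rpow_neg hφ.le]
          field_simp

def weightedKernel (ν lam κ γ φ θ : ℝ) : ℝ :=
  φ ^ ν * ((φ / (θ + φ)) ^ lam * θ ^ γ * |θ - φ| ^ (-κ))

namespace weightedKernel

variable {ν lam κ γ φ θ : ℝ}

theorem measurable : Measurable (weightedKernel ν lam κ γ φ) := by
  unfold weightedKernel; fun_prop

theorem nonneg (hφ : 0 ≤ φ) (hθ : 0 ≤ θ) : 0 ≤ weightedKernel ν lam κ γ φ θ := by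
  unfold weightedKernel; positivity

theorem le_of_le_half (hφ : 0 < φ) (hθ : 0 < θ) (h : θ ≤ φ / 2) :
    weightedKernel ν lam κ γ φ θ ≤ 2 ^ |lam| * 2 ^ |κ| * φ ^ (ν - κ) * θ ^ γ := by
  have hratio : (φ / (θ + φ)) ^ lam ≤ 2 ^ |lam| := by
    simpa using rpow_le_of_mem_Icc_div_mul lam one_pos one_le_two
      ⟨by rw [le_div_iff₀ (by positivity)]; linarith,
       by rw [div_le_iff₀ (by positivity)]; linarith⟩
  have hdist : |θ - φ| ^ (-κ) ≤ 2 ^ |κ| * φ ^ (-κ) := by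
    simpa only [abs_neg] using rpow_le_of_mem_Icc_div_mul (-κ) hφ one_le_two
      ⟨by rw [abs_sub_comm, abs_of_pos (by linarith)]; linarith,
       by rw [abs_sub_comm, abs_of_pos (by linarith)]; linarith⟩
  calc weightedKernel ν lam κ γ φ θ
      ≤ φ ^ ν * (2 ^ |lam| * θ ^ γ * (2 ^ |κ| * φ ^ (-κ))) := by
        unfold weightedKernel; gcongr
    _ = 2 ^ |lam| * 2 ^ |κ| * φ ^ (ν - κ) * θ ^ γ := by
        rw [sub_eq_add_neg, rpow_add hφ]; ring

theorem le_of_mem_Ioc_half_two_mul (hφ : 0 < φ) (h : θ ∈ Ioc (φ / 2) (2 * φ)) :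
    weightedKernel ν lam κ γ φ θ ≤ 3 ^ |lam| * 2 ^ |γ| * φ ^ (ν + γ) * |θ - φ| ^ (-κ) := by
  obtain ⟨h₁, h₂⟩ := h
  have hθ₀ : 0 < θ := by linarith
  have hratio : (φ / (θ + φ)) ^ lam ≤ 3 ^ |lam| := by
    simpa using rpow_le_of_mem_Icc_div_mul lam one_pos (by norm_num : (1 : ℝ) ≤ 3)
      ⟨by rw [le_div_iff₀ (by positivity)]; linarith,
       by rw [div_le_iff₀ (by positivity)]; linarith⟩
  have hθ : θ ^ γ ≤ 2 ^ |γ| * φ ^ γ :=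
    rpow_le_of_mem_Icc_div_mul γ hφ one_le_two ⟨h₁.le, by linarith⟩
  calc weightedKernel ν lam κ γ φ θ
      ≤ φ ^ ν * (3 ^ |lam| * (2 ^ |γ| * φ ^ γ) * |θ - φ| ^ (-κ)) := by
        unfold weightedKernel; gcongr
    _ = 3 ^ |lam| * 2 ^ |γ| * φ ^ (ν + γ) * |θ - φ| ^ (-κ) := by
        rw [rpow_add hφ]; ring

theorem le_of_two_mul_lt (hφ : 0 < φ) (h : 2 * φ < θ) :
    weightedKernel ν lam κ γ φ θ ≤ 2 ^ |lam| * 2 ^ |κ| * φ ^ (ν + lam) * θ ^ (γ - lam - κ) := by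
  have hθ : 0 < θ := by linarith
  have hratio : (θ + φ) ^ (-lam) ≤ 2 ^ |lam| * θ ^ (-lam) := by
    simpa only [abs_neg] using rpow_le_of_mem_Icc_div_mul (-lam) hθ one_le_two
      ⟨by linarith, by linarith⟩
  have hdist : |θ - φ| ^ (-κ) ≤ 2 ^ |κ| * θ ^ (-κ) := by
    simpa only [abs_neg] using rpow_le_of_mem_Icc_div_mul (-κ) hθ one_le_two
      ⟨by rw [abs_of_pos (by linarith)]; linarith, by rw [abs_of_pos (by linarith)]; linarith⟩
  calc weightedKernel ν lam κ γ φ θ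
      = φ ^ (ν + lam) * ((θ + φ) ^ (-lam) * θ ^ γ * |θ - φ| ^ (-κ)) := by
        unfold weightedKernel
        rw [div_rpow hφ.le (by positivity), rpow_add hφ, rpow_neg (by positivity : 0 ≤ θ + φ) lam]
        ring
    _ ≤ φ ^ (ν + lam) * (2 ^ |lam| * θ ^ (-lam) * θ ^ γ * (2 ^ |κ| * θ ^ (-κ))) := by gcongr
    _ = 2 ^ |lam| * 2 ^ |κ| * φ ^ (ν + lam) * θ ^ (γ - lam - κ) := by
        rw [sub_eq_add_neg, sub_eq_add_neg, rpow_add hθ, rpow_add hθ]; ring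

theorem integrableOn_and_integral_Ioc_zero_half_le (hγ : -1 < γ) (hφ : 0 < φ) :
    IntegrableOn (weightedKernel ν lam κ γ φ) (Ioc 0 (φ / 2)) ∧
      ∫ θ in Ioc 0 (φ / 2), weightedKernel ν lam κ γ φ θ
        ≤ 2 ^ |lam| * 2 ^ |κ| / (γ + 1) * φ ^ (γ + 1 + ν - κ) := by
  have hγ₁ : 0 < γ + 1 := by linarith
  have hint : IntegrableOn (fun θ : ℝ ↦ θ ^ γ) (Ioc 0 (φ / 2)) :=
    (intervalIntegral.intervalIntegrable_rpow' hγ).1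
  obtain ⟨hfi, hle⟩ := integrableOn_and_setIntegral_le_of_le measurableSet_Ioc
    measurable.aestronglyMeasurable (fun θ hθ ↦ nonneg hφ.le hθ.1.le)
    (fun θ hθ ↦ le_of_le_half hφ hθ.1 hθ.2) (hint.const_mul _)
  refine ⟨hfi, hle.trans ?_⟩
  rw [integral_const_mul, ← intervalIntegral.integral_of_le (by positivity),
    integral_rpow (Or.inl hγ), zero_rpow hγ₁.ne', sub_zero]
  have hhalf : (φ / 2) ^ (γ + 1) ≤ φ ^ (γ + 1) := by gcongr; linarith
  calc 2 ^ |lam| * 2 ^ |κ| * φ ^ (ν - κ) * ((φ / 2) ^ (γ + 1) / (γ + 1))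
      ≤ 2 ^ |lam| * 2 ^ |κ| * φ ^ (ν - κ) * (φ ^ (γ + 1) / (γ + 1)) := by gcongr
    _ = 2 ^ |lam| * 2 ^ |κ| / (γ + 1) * φ ^ (γ + 1 + ν - κ) := by
        rw [show γ + 1 + ν - κ = ν - κ + (γ + 1) by ring, rpow_add hφ (ν - κ)]; ring

theorem integrableOn_and_integral_Ioc_half_two_mul_le (hκ : κ < 1) (hφ : 0 < φ) :
    IntegrableOn (weightedKernel ν lam κ γ φ) (Ioc (φ / 2) (2 * φ)) ∧
      ∫ θ in Ioc (φ / 2) (2 * φ), weightedKernel ν lam κ γ φ θ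
        ≤ 2 * 3 ^ |lam| * 2 ^ |γ| / (1 - κ) * φ ^ (γ + 1 + ν - κ) := by
  have hκ₁ : -κ + 1 = 1 - κ := by ring
  have hint : IntegrableOn (fun θ ↦ |θ - φ| ^ (-κ)) (Ioc (φ / 2) (2 * φ)) :=
    (intervalIntegrable_rpow_abs_sub (by linarith) _ _ φ).1
  obtain ⟨hfi, hle⟩ := integrableOn_and_setIntegral_le_of_le measurableSet_Ioc
    measurable.aestronglyMeasurable (fun θ hθ ↦ nonneg hφ.le (by linarith [hθ.1]))
    (fun θ hθ ↦ le_of_mem_Ioc_half_two_mul hφ hθ) (hint.const_mul _)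
  refine ⟨hfi, hle.trans ?_⟩
  rw [integral_const_mul, integral_Ioc_rpow_abs_sub (by linarith) (by linarith) (by linarith),
    hκ₁, show 2 * φ - φ = φ by ring]
  have hhalf : (φ - φ / 2) ^ (1 - κ) ≤ φ ^ (1 - κ) := by gcongr <;> linarith
  have hκ₀ : 0 < 1 - κ := by linarith
  calc 3 ^ |lam| * 2 ^ |γ| * φ ^ (ν + γ) * (((φ - φ / 2) ^ (1 - κ) + φ ^ (1 - κ)) / (1 - κ))
      ≤ 3 ^ |lam| * 2 ^ |γ| * φ ^ (ν + γ) * ((φ ^ (1 - κ) + φ ^ (1 - κ)) / (1 - κ)) := by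
        gcongr
    _ = 2 * 3 ^ |lam| * 2 ^ |γ| / (1 - κ) * φ ^ (γ + 1 + ν - κ) := by
        rw [show γ + 1 + ν - κ = ν + γ + (1 - κ) by ring, rpow_add hφ (ν + γ)]; ring

theorem exists_integrableOn_and_integral_Ioc_two_mul_le (R : ℝ) (hνlam : 0 ≤ ν + lam)
    (hb : 0 ≤ γ + 1 + ν - κ) (hpos : 0 < ν + lam + (γ + 1 + ν - κ)) :
    ∃ C, ∀ φ > 0, IntegrableOn (weightedKernel ν lam κ γ φ) (Ioc (2 * φ) R) ∧
      ∫ θ in Ioc (2 * φ) R, weightedKernel ν lam κ γ φ θ ≤ C := by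
  obtain ⟨C, hC⟩ := exists_rpow_mul_integral_Ioc_two_mul_le R hνlam hb hpos
  refine ⟨2 ^ |lam| * 2 ^ |κ| * C, fun φ hφ ↦ ?_⟩
  have hint : IntegrableOn (fun θ ↦ θ ^ (γ - lam - κ)) (Ioc (2 * φ) R) :=
    ((continuousOn_id.rpow_const fun θ hθ ↦ Or.inl (by linarith [hθ.1] : θ ≠ 0)
      ).integrableOn_Icc).mono_set Ioc_subset_Icc_self
  obtain ⟨hfi, hle⟩ := integrableOn_and_setIntegral_le_of_le measurableSet_Ioc
    measurable.aestronglyMeasurable (fun θ hθ ↦ nonneg hφ.le (by linarith [hθ.1]))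
    (fun θ hθ ↦ le_of_two_mul_lt hφ hθ.1) (hint.const_mul _)
  refine ⟨hfi, hle.trans ?_⟩
  have hCφ := hC φ hφ
  rw [show γ + 1 + ν - κ - (ν + lam) - 1 = γ - lam - κ by ring] at hCφ
  rw [integral_const_mul, mul_assoc]
  gcongr

end weightedKernel

/-- a uniform bound for the integral
`φ^ν ∫₀^{π/4} (φ/(θ+φ))^λ θ^γ |θ−φ|^{−κ} dθ`, `φ ∈ (0,π)`. -/
theorem weighted_interval_integral_uniform_bound
    (ν lam κ γ : ℝ) (hκ : κ < 1) (hγ : -1 < γ)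
    (h₁ : 0 ≤ ν + lam) (h₂ : 0 ≤ γ + 1 + ν - κ)
    (h₃ : ¬ (ν + lam = 0 ∧ γ + 1 + ν - κ = 0)) :
    ∃ C : ℝ, ∀ φ ∈ Set.Ioo 0 π,
      φ ^ ν * ∫ θ in Set.Ioo 0 (π/4),
        (φ / (θ + φ)) ^ lam * θ ^ γ * |θ - φ| ^ (-κ) ≤ C := by
  have hpos : 0 < ν + lam + (γ + 1 + ν - κ) := by
    by_contra! h
    exact h₃ ⟨by linarith, by linarith⟩
  obtain ⟨C, hC⟩ :=
    weightedKernel.exists_integrableOn_and_integral_Ioc_two_mul_le (π / 4) h₁ h₂ hpos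
  set c₁ := 2 ^ |lam| * 2 ^ |κ| / (γ + 1)
  set c₂ := 2 * 3 ^ |lam| * 2 ^ |γ| / (1 - κ)
  have hc₁ : 0 ≤ c₁ := div_nonneg (by positivity) (by linarith)
  have hc₂ : 0 ≤ c₂ := div_nonneg (by positivity) (by linarith)
  refine ⟨c₁ * π ^ (γ + 1 + ν - κ) + (c₂ * π ^ (γ + 1 + ν - κ) + C), fun φ ⟨hφ, hφπ⟩ ↦ ?_⟩
  obtain ⟨hint₁, hle₁⟩ := weightedKernel.integrableOn_and_integral_Ioc_zero_half_le
    (ν := ν) (lam := lam) (κ := κ) hγ hφ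
  obtain ⟨hint₂, hle₂⟩ := weightedKernel.integrableOn_and_integral_Ioc_half_two_mul_le
    (ν := ν) (lam := lam) (γ := γ) hκ hφ
  obtain ⟨hint₃, hle₃⟩ := hC φ hφ
  have hφπ' : φ ^ (γ + 1 + ν - κ) ≤ π ^ (γ + 1 + ν - κ) := rpow_le_rpow hφ.le hφπ.le h₂
  rw [← integral_const_mul]
  refine (setIntegral_Ioo_le_add_add (by positivity) (by linarith)
    (fun θ hθ ↦ weightedKernel.nonneg hφ.le hθ.le) hint₁ hint₂ hint₃).trans ?_
  gcongr
  exacts [hle₁.trans (by gcongr), hle₂.trans (by gcongr)]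

end
end
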